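/- arXiv:math/0010235 — 7 statements merged into one kernel-verified Lean document; each statement's English description precedes it below -/
import Mathlib

section
/- (Compatibility identity in the proof of Theorem 2.) Let σ, x0, x1, x∞ ∈ ℂ and F ∈ ℂ ∖ {0} satisfy: x0² = 2(1 − cos(πσ)); sin(πσ) ≠ 0; and x1² + x∞² − x0·x1·x∞ ≠ 0. Set f := (4 − x0²)/(x1² + x∞² − x0·x1·x∞), X := [2(1 + e^{−iπσ}) − f·(x1² + x∞²·e^{−iπσ})] / (F·(e^{−2πiσ} − 1)), and Y := F·[f·e^{−iπσ}·(e^{−iπσ}·x1² + x∞²) − 2e^{−iπσ}·(1 + e^{−iπσ})] / (e^{−2πiσ} − 1). Then X·Y = 1. -/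
open Complex

/-- **Compatibility identity in the proof of Theorem 2**: the two candidate solutions
`X` (for `F·s`) and `Y` (for `1/(F·s)`) produced by Cramer's rule satisfy `X·Y = 1`. -/
theorem compatibility_identity
    (σ x0 x1 xi F : ℂ) (hF : F ≠ 0)
    (hx0 : x0 ^ 2 = 2 * (1 - Complex.cos ((Real.pi : ℂ) * σ)))
    (hs : Complex.sin ((Real.pi : ℂ) * σ) ≠ 0)
    (hden : x1 ^ 2 + xi ^ 2 - x0 * x1 * xi ≠ 0) :
    (let f : ℂ := (4 - x0 ^ 2) / (x1 ^ 2 + xi ^ 2 - x0 * x1 * xi);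
     let X : ℂ := (2 * (1 + Complex.exp (-(Real.pi : ℂ) * Complex.I * σ))
        - f * (x1 ^ 2 + xi ^ 2 * Complex.exp (-(Real.pi : ℂ) * Complex.I * σ)))
        / (F * (Complex.exp (-2 * (Real.pi : ℂ) * Complex.I * σ) - 1));
     let Y : ℂ := F * (f * Complex.exp (-(Real.pi : ℂ) * Complex.I * σ)
            * (Complex.exp (-(Real.pi : ℂ) * Complex.I * σ) * x1 ^ 2 + xi ^ 2)
          - 2 * Complex.exp (-(Real.pi : ℂ) * Complex.I * σ)
            * (1 + Complex.exp (-(Real.pi : ℂ) * Complex.I * σ)))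
        / (Complex.exp (-2 * (Real.pi : ℂ) * Complex.I * σ) - 1);
     X * Y = 1) := by
  dsimp only
  set e : ℂ := Complex.exp (-(Real.pi : ℂ) * Complex.I * σ) with he_def
  have he : e ≠ 0 := Complex.exp_ne_zero _
  have h2 : Complex.exp (-2 * (Real.pi : ℂ) * Complex.I * σ) = e ^ 2 := by
    rw [he_def, sq, ← Complex.exp_add]; congr 1; ring
  have hinv : Complex.exp ((Real.pi : ℂ) * σ * Complex.I) * e = 1 := by
    rw [he_def, ← Complex.exp_add]
    rw [show (Real.pi : ℂ) * σ * Complex.I + -(Real.pi : ℂ) * Complex.I * σ = 0 by ring]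
    exact Complex.exp_zero
  have hcos : Complex.cos ((Real.pi : ℂ) * σ)
      = (Complex.exp ((Real.pi : ℂ) * σ * Complex.I)
        + Complex.exp (-((Real.pi : ℂ) * σ) * Complex.I)) / 2 := rfl
  have hee : Complex.exp (-((Real.pi : ℂ) * σ) * Complex.I) = e := by
    rw [he_def]; congr 1; ring
  have hkey : e * x0 ^ 2 = 2 * e - e ^ 2 - 1 := by
    rw [hx0, hcos, hee]
    linear_combination -hinv
  have hne : e ^ 2 - 1 ≠ 0 := by
    intro h
    apply hs
    have hsin : Complex.sin ((Real.pi : ℂ) * σ)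
        = (Complex.exp (-((Real.pi : ℂ) * σ) * Complex.I)
          - Complex.exp ((Real.pi : ℂ) * σ * Complex.I)) * Complex.I / 2 := rfl
    rw [hsin, hee]
    have h1 : Complex.exp ((Real.pi : ℂ) * σ * Complex.I) = e := by
      linear_combination e * hinv - Complex.exp ((Real.pi : ℂ) * σ * Complex.I) * h
    rw [h1]; ring
  rw [h2]
  field_simp
  linear_combination (-(e^2*x0^2*x1^2*xi^2) - e*x0^2*x1^4 - e*x0^2*xi^4 - x0^2*x1^2*xi^2
    + 2*e^2*x0*x1^3*xi + 2*e^2*x0*x1*xi^3 + 4*e*x0*x1^3*xi + 4*e*x0*x1*xi^3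
    + 2*x0*x1*xi^3 + 2*x0*x1^3*xi - e^2*x1^4 - e^2*xi^4 - 2*e^2*x1^2*xi^2
    + 2*e*x1^4 - 12*e*x1^2*xi^2 + 2*e*xi^4 - xi^4 - x1^4 - 2*x1^2*xi^2) * hkey
end

section
/- (Theorem 2 i), consistency of the monodromy data.) Let σ, μ ∈ ℂ with cos(πσ/2) ≠ 0 and cos(πσ) ≠ cos(2πμ), and set f := 2cos²(πσ/2)/(cos(πσ) − cos(2πμ)). Then for all w, G ∈ ℂ ∖ {0}, the three numbers x0 := 2·sin(πσ/2), x1 := i·(w/(f·G) − G/w), x∞ := w/(f·G·e^{−iπσ/2}) + G·e^{−iπσ/2}/w satisfy the relation x0² + x1² + x∞² − x0·x1·x∞ = 4·sin²(πμ). -/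
open Complex

/-- **Theorem 2 i) (consistency of the monodromy data)**: the triple
`x₀ = 2 sin(πσ/2)`, `x₁ = i(w/(fG) − G/w)`, `x_∞ = w/(fG e^{−iπσ/2}) + G e^{−iπσ/2}/w`
satisfies `x₀² + x₁² + x_∞² − x₀x₁x_∞ = 4 sin²(πμ)`. -/
theorem theorem2_monodromy_relation
    (σ μ : ℂ)
    (hcos2 : Complex.cos ((Real.pi : ℂ) * σ / 2) ≠ 0)
    (hcos : Complex.cos ((Real.pi : ℂ) * σ) ≠ Complex.cos (2 * (Real.pi : ℂ) * μ)) :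
    ∀ w G : ℂ, w ≠ 0 → G ≠ 0 →
      (let f : ℂ := 2 * Complex.cos ((Real.pi : ℂ) * σ / 2) ^ 2
          / (Complex.cos ((Real.pi : ℂ) * σ) - Complex.cos (2 * (Real.pi : ℂ) * μ));
       let x0 : ℂ := 2 * Complex.sin ((Real.pi : ℂ) * σ / 2);
       let x1 : ℂ := Complex.I * (w / (f * G) - G / w);
       let xi : ℂ := w / (f * G * Complex.exp (-(Real.pi : ℂ) * Complex.I * σ / 2))
          + G * Complex.exp (-(Real.pi : ℂ) * Complex.I * σ / 2) / w;
       x0 ^ 2 + x1 ^ 2 + xi ^ 2 - x0 * x1 * xi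
          = 4 * Complex.sin ((Real.pi : ℂ) * μ) ^ 2) := by
  intro w G hw hG
  dsimp only
  set c : ℂ := Complex.cos ((Real.pi : ℂ) * σ / 2) with hc
  set s : ℂ := Complex.sin ((Real.pi : ℂ) * σ / 2) with hs
  set m : ℂ := Complex.sin ((Real.pi : ℂ) * μ) with hm
  set e : ℂ := Complex.exp (-(Real.pi : ℂ) * Complex.I * σ / 2) with heq
  have hsc : s ^ 2 + c ^ 2 = 1 := Complex.sin_sq_add_cos_sq _
  have he : e = c - Complex.I * s := by
    have h2 : -(Real.pi : ℂ) * Complex.I * σ / 2 = (-((Real.pi : ℂ) * σ / 2)) * Complex.I := by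
      ring
    rw [heq, h2, Complex.exp_mul_I, Complex.cos_neg, Complex.sin_neg, hc, hs]
    ring
  have hD : Complex.cos ((Real.pi : ℂ) * σ) - Complex.cos (2 * (Real.pi : ℂ) * μ) ≠ 0 :=
    sub_ne_zero.mpr hcos
  set D : ℂ := Complex.cos ((Real.pi : ℂ) * σ) - Complex.cos (2 * (Real.pi : ℂ) * μ) with hDdef
  set f : ℂ := 2 * c ^ 2 / D with hfdef
  have h2c : (2 : ℂ) * c ^ 2 ≠ 0 := mul_ne_zero two_ne_zero (pow_ne_zero _ hcos2)
  have hf : f ≠ 0 := div_ne_zero h2c hD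
  have hDval : D = 2 * m ^ 2 - 2 * s ^ 2 := by
    have h1 : Complex.cos ((Real.pi : ℂ) * σ) = 1 - 2 * s ^ 2 := by
      have h : (Real.pi : ℂ) * σ = 2 * ((Real.pi : ℂ) * σ / 2) := by ring
      rw [h, Complex.cos_two_mul']
      linear_combination hsc
    have h2 : Complex.cos (2 * (Real.pi : ℂ) * μ) = 1 - 2 * m ^ 2 := by
      have h : 2 * (Real.pi : ℂ) * μ = 2 * ((Real.pi : ℂ) * μ) := by ring
      rw [h, Complex.cos_two_mul']
      linear_combination (Complex.sin_sq_add_cos_sq ((Real.pi : ℂ) * μ))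
    rw [hDdef, h1, h2]; ring
  set a : ℂ := w / (f * G) with ha
  set b : ℂ := G / w with hb
  have hab1 : a * b = 1 / f := by
    rw [ha, hb]
    field_simp
  have hab : a * b * (2 * c ^ 2) = 2 * m ^ 2 - 2 * s ^ 2 := by
    rw [hab1, hfdef, one_div_div, div_mul_cancel₀ _ h2c, hDval]
  have hinv : e * (c + Complex.I * s) = 1 := by
    rw [he]
    linear_combination hsc - s ^ 2 * Complex.I_sq
  have h1 : w / (f * G * e) = a * (c + Complex.I * s) := by
    rw [div_mul_eq_div_div, ← ha, div_eq_mul_inv, inv_eq_of_mul_eq_one_right hinv]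
  have hxi : w / (f * G * e) + G * e / w = a * (c + Complex.I * s) + b * (c - Complex.I * s) := by
    rw [h1, he, hb]; ring
  rw [hxi]
  linear_combination (a - b) ^ 2 * hsc + (1 - s ^ 2) * (a - b) ^ 2 * Complex.I_sq + 2 * hab
end

section
/- (Braid group action on monodromy data.) Define Q(x0, x1, x∞) := x0² + x1² + x∞² − x0·x1·x∞ and the maps β1(x0, x1, x∞) := (−x0, x∞ − x0·x1, x1) and β2(x0, x1, x∞) := (x∞, −x1, x0 − x1·x∞) on ℂ³. Then for all (x0, x1, x∞) ∈ ℂ³: (a) Q(β1(x0,x1,x∞)) = Q(x0,x1,x∞) and Q(β2(x0,x1,x∞)) = Q(x0,x1,x∞); (b) β1(β1(x0,x1,x∞)) = (x0, x1 + x0·x∞ − x1·x0², x∞ − x0·x1) and β2(β2(x0,x1,x∞)) = (x0 − x1·x∞, x1, x∞ + x0·x1 − x∞·x1²). -/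
/-- The quadratic form `Q(x₀, x₁, x_∞) = x₀² + x₁² + x_∞² − x₀x₁x_∞` on the space
of monodromy data. -/
def Qform (x0 x1 xi : ℂ) : ℂ := x0 ^ 2 + x1 ^ 2 + xi ^ 2 - x0 * x1 * xi

/-- The braid `β₁` acting on triples of monodromy data. -/
def braid1 : ℂ × ℂ × ℂ → ℂ × ℂ × ℂ :=
  fun p => (-p.1, p.2.2 - p.1 * p.2.1, p.2.1)

/-- The braid `β₂` acting on triples of monodromy data. -/
def braid2 : ℂ × ℂ × ℂ → ℂ × ℂ × ℂ :=
  fun p => (p.2.2, -p.2.1, p.1 - p.2.1 * p.2.2)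

/-- **Braid group action on monodromy data**: the braids `β₁, β₂` preserve the quadratic
form `Q`, and their squares (the pure braids describing analytic continuation of Painlevé VI
branches around `x = 0` and `x = 1`) are given by the stated formulas. -/
theorem braid_action_on_monodromy_data :
    ∀ x0 x1 xi : ℂ,
      (Qform (braid1 (x0, x1, xi)).1 (braid1 (x0, x1, xi)).2.1 (braid1 (x0, x1, xi)).2.2
          = Qform x0 x1 xi ∧
       Qform (braid2 (x0, x1, xi)).1 (braid2 (x0, x1, xi)).2.1 (braid2 (x0, x1, xi)).2.2
          = Qform x0 x1 xi) ∧
      (braid1 (braid1 (x0, x1, xi))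
          = (x0, x1 + x0 * xi - x1 * x0 ^ 2, xi - x0 * x1) ∧
       braid2 (braid2 (x0, x1, xi))
          = (x0 - x1 * xi, x1, xi + x0 * x1 - xi * x1 ^ 2)) := by
  intro x0 x1 xi
  refine ⟨⟨by simp [Qform, braid1]; ring, by simp [Qform, braid2]; ring⟩, by simp [braid1]; ring, by simp [braid2]; ring⟩
end

section
/- (Lemma 5, gauge equivalence of the Fuchsian system with the hypergeometric equation.) Let α, β, γ, r ∈ ℂ with α ≠ β, α ≠ 0, α + 1 − γ ≠ 0 and r ≠ 0, and let B0 := [[α(1+β−γ)/(α−β), α(γ−α−1)r/(α−β)],[β(β+1−γ)/((α−β)r), β(γ−α−1)/(α−β)]] and B1 := [[α(γ−α−1)/(α−β), −α(γ−α−1)r/(α−β)],[−β(β+1−γ)/((α−β)r), β(β+1−γ)/(α−β)]]. Let U ⊆ ℂ ∖ {0, 1} be open and let y : U → ℂ be twice differentiable and satisfy the Gauss hypergeometric equation with parameters α0 = α, β0 = β+1, γ0 = γ, i.e. z(1−z)·y'' + (γ − (α+β+2)z)·y' − α(β+1)·y = 0 on U. Then the vector function X(z) := (y(z), X2(z)),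 where X2(z) := ((α−β)/(α(α+1−γ)r))·[(α·z + α(1+β−γ)/(α−β))·y(z) + z(z−1)·y'(z)], satisfies the Fuchsian system X'(z) = (B0/z + B1/(z−1))·X(z) on U. In particular the system with residue matrices B0, B1 and the hypergeometric equation have the same singular points 0, 1, ∞. -/
open Matrix

noncomputable section

/-- The residue matrix `B₀` of Lemma 4. -/
def LB0 (α β γ r : ℂ) : Matrix (Fin 2) (Fin 2) ℂ :=
  !![α * (1 + β - γ) / (α - β), α * (γ - α - 1) * r / (α - β);
     β * (β + 1 - γ) / ((α - β) * r), β * (γ - α - 1) / (α - β)]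

/-- The residue matrix `B₁` of Lemma 4. -/
def LB1 (α β γ r : ℂ) : Matrix (Fin 2) (Fin 2) ℂ :=
  !![α * (γ - α - 1) / (α - β), -(α * (γ - α - 1) * r / (α - β));
     -(β * (β + 1 - γ) / ((α - β) * r)), β * (β + 1 - γ) / (α - β)]

/-- The second component of the gauge-transformed vector `X = G(z)Ψ` of Lemma 5. -/
def X2fun (α β γ r : ℂ) (y : ℂ → ℂ) : ℂ → ℂ := fun z =>
  ((α - β) / (α * (α + 1 - γ) * r)) *
    ((α * z + α * (1 + β - γ) / (α - β)) * y z + z * (z - 1) * deriv y z)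

/-!
The first row of the system is the definition of `X₂` solved for `y'`. Differentiating `X₂` and
eliminating `y''` with the hypergeometric equation gives
`X₂' = -c β (α y + (z + (γ - α - 1)/(α - β)) y')`, where `c = (α - β)/(α (α + 1 - γ) r)` is the
gauge constant; substituting `X₂ = c (p y + z (z - 1) y')` into the second row, with `p` the
linear factor in `X₂`, turns it into the same expression.
-/

section
variable {α β γ r z : ℂ} {y : ℂ → ℂ}

theorem hasDerivAt_X2fun (hy : DifferentiableAt ℂ y z) (hy' : DifferentiableAt ℂ (deriv y) z) :
    HasDerivAt (X2fun α β γ r y)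
      ((α - β) / (α * (α + 1 - γ) * r) *
        (α * y z + (α * z + α * (1 + β - γ) / (α - β) + 2 * z - 1) * deriv y z
          + z * (z - 1) * deriv (deriv y) z)) z := by
  have hp : HasDerivAt (fun w => (α * w + α * (1 + β - γ) / (α - β)) * y w)
      (α * y z + (α * z + α * (1 + β - γ) / (α - β)) * deriv y z) z :=
    ((((hasDerivAt_id' z).const_mul α).add_const _).fun_mul hy.hasDerivAt).congr_deriv
      (by ring)
  have hq : HasDerivAt (fun w => w * (w - 1) * deriv y w)
      ((2 * z - 1) * deriv y z + z * (z - 1) * deriv (deriv y) z) z :=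
    (((hasDerivAt_id' z).fun_mul ((hasDerivAt_id' z).sub_const 1)).fun_mul
      hy'.hasDerivAt).congr_deriv (by ring)
  exact ((hp.fun_add hq).const_mul ((α - β) / (α * (α + 1 - γ) * r))).congr_deriv (by ring)

theorem deriv_X2fun_of_hypergeometric (hαβ : α ≠ β)
    (hy : DifferentiableAt ℂ y z) (hy' : DifferentiableAt ℂ (deriv y) z)
    (hhyp : z * (1 - z) * deriv (deriv y) z + (γ - (α + β + 2) * z) * deriv y z
        - α * (β + 1) * y z = 0) :
    deriv (X2fun α β γ r y) z = -((α - β) / (α * (α + 1 - γ) * r)) * β *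
      (α * y z + (z + (γ - α - 1) / (α - β)) * deriv y z) := by
  have hαβ' : α - β ≠ 0 := sub_ne_zero.mpr hαβ
  have hode : z * (z - 1) * deriv (deriv y) z
      = (γ - (α + β + 2) * z) * deriv y z - α * (β + 1) * y z := by
    linear_combination -hhyp
  rw [(hasDerivAt_X2fun hy hy').deriv, hode]
  field_simp
  ring

theorem fuchs_system_row_zero (hαβ : α ≠ β) (hα : α ≠ 0) (hγ : α + 1 - γ ≠ 0) (hr : r ≠ 0)
    (hz0 : z ≠ 0) (hz1 : z ≠ 1) (y : ℂ → ℂ) :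
    deriv y z
        = (LB0 α β γ r 0 0 / z + LB1 α β γ r 0 0 / (z - 1)) * y z
          + (LB0 α β γ r 0 1 / z + LB1 α β γ r 0 1 / (z - 1)) * X2fun α β γ r y z := by
  have hαβ' : α - β ≠ 0 := sub_ne_zero.mpr hαβ
  have hz1' : z - 1 ≠ 0 := sub_ne_zero.mpr hz1
  simp only [LB0, LB1, X2fun, of_apply, cons_val', cons_val_zero, cons_val_one, cons_val_fin_one]
  field_simp
  ring

theorem fuchs_system_row_one (hαβ : α ≠ β) (hα : α ≠ 0) (hγ : α + 1 - γ ≠ 0) (hr : r ≠ 0)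
    (hz0 : z ≠ 0) (hz1 : z ≠ 1)
    (hy : DifferentiableAt ℂ y z) (hy' : DifferentiableAt ℂ (deriv y) z)
    (hhyp : z * (1 - z) * deriv (deriv y) z + (γ - (α + β + 2) * z) * deriv y z
        - α * (β + 1) * y z = 0) :
    deriv (X2fun α β γ r y) z
        = (LB0 α β γ r 1 0 / z + LB1 α β γ r 1 0 / (z - 1)) * y z
          + (LB0 α β γ r 1 1 / z + LB1 α β γ r 1 1 / (z - 1)) * X2fun α β γ r y z := by
  have hαβ' : α - β ≠ 0 := sub_ne_zero.mpr hαβ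
  have hz1' : z - 1 ≠ 0 := sub_ne_zero.mpr hz1
  rw [deriv_X2fun_of_hypergeometric hαβ hy hy' hhyp]
  simp only [LB0, LB1, X2fun, of_apply, cons_val', cons_val_zero, cons_val_one, cons_val_fin_one]
  field_simp
  ring

end

theorem lemma5_gauge_equivalence_general
    (α β γ r : ℂ) (hαβ : α ≠ β) (hα : α ≠ 0) (hγ : α + 1 - γ ≠ 0) (hr : r ≠ 0)
    (U : Set ℂ) (hU' : ∀ z ∈ U, z ≠ 0 ∧ z ≠ 1)
    (y : ℂ → ℂ)
    (hy : ∀ z ∈ U, DifferentiableAt ℂ y z ∧ DifferentiableAt ℂ (deriv y) z)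
    (hhyp : ∀ z ∈ U,
      z * (1 - z) * deriv (deriv y) z + (γ - (α + β + 2) * z) * deriv y z
        - α * (β + 1) * y z = 0) :
    ∀ z ∈ U,
      deriv y z
        = (LB0 α β γ r 0 0 / z + LB1 α β γ r 0 0 / (z - 1)) * y z
          + (LB0 α β γ r 0 1 / z + LB1 α β γ r 0 1 / (z - 1)) * X2fun α β γ r y z ∧
      deriv (X2fun α β γ r y) z
        = (LB0 α β γ r 1 0 / z + LB1 α β γ r 1 0 / (z - 1)) * y z
          + (LB0 α β γ r 1 1 / z + LB1 α β γ r 1 1 / (z - 1)) * X2fun α β γ r y z := by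
  intro z hz
  obtain ⟨hz0, hz1⟩ := hU' z hz
  obtain ⟨hy₁, hy₂⟩ := hy z hz
  exact ⟨fuchs_system_row_zero hαβ hα hγ hr hz0 hz1 y,
    fuchs_system_row_one hαβ hα hγ hr hz0 hz1 hy₁ hy₂ (hhyp z hz)⟩

/-- **Lemma 5** (gauge equivalence of the Fuchsian system with the hypergeometric
equation): if `y` solves the hypergeometric equation with parameters
`α₀ = α, β₀ = β + 1, γ₀ = γ`, then `X = (y, X₂)` solves the Fuchsian system
`X' = (B₀/z + B₁/(z−1))X`. -/
theorem lemma5_gauge_equivalence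
    (α β γ r : ℂ) (hαβ : α ≠ β) (hα : α ≠ 0) (hγ : α + 1 - γ ≠ 0) (hr : r ≠ 0)
    (U : Set ℂ) (hU : IsOpen U) (hU' : ∀ z ∈ U, z ≠ 0 ∧ z ≠ 1)
    (y : ℂ → ℂ)
    (hy : ∀ z ∈ U, DifferentiableAt ℂ y z ∧ DifferentiableAt ℂ (deriv y) z)
    (hhyp : ∀ z ∈ U,
      z * (1 - z) * deriv (deriv y) z + (γ - (α + β + 2) * z) * deriv y z
        - α * (β + 1) * y z = 0) :
    ∀ z ∈ U,
      deriv y z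
        = (LB0 α β γ r 0 0 / z + LB1 α β γ r 0 0 / (z - 1)) * y z
          + (LB0 α β γ r 0 1 / z + LB1 α β γ r 0 1 / (z - 1)) * X2fun α β γ r y z ∧
      deriv (X2fun α β γ r y) z
        = (LB0 α β γ r 1 0 / z + LB1 α β γ r 1 0 / (z - 1)) * y z
          + (LB0 α β γ r 1 1 / z + LB1 α β γ r 1 1 / (z - 1)) * X2fun α β γ r y z :=
  lemma5_gauge_equivalence_general α β γ r hαβ hα hγ hr U hU' y hy hhyp
end
end

section
/- (Polynomial solutions of the WDVV equations associated with the Coxeter groups A3, B3, H3.) For every a ∈ ℂ, each of the following three polynomial functions f(t2, t3) satisfies the WDVV equation f_{222}·f_{233} + f_{333} = (f_{223})² at every point (t2, t3) ∈ ℂ²: (A3) f = a·t2²·t3² + (4/15)·a²·t3⁵; (B3) f = a·t2³·t3 + 6a²·t2²·t3³ + (216/35)·a⁴·t3⁷; (H3) f = a·t2³·t3² + (9/5)·a²·t2²·t3⁵ + (18/55)·a⁴·t3¹¹. -/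
noncomputable section

/-- Partial derivative with respect to the first variable `t₂`. -/
def pd2 (f : ℂ → ℂ → ℂ) : ℂ → ℂ → ℂ := fun a b => deriv (fun s => f s b) a

/-- Partial derivative with respect to the second variable `t₃`. -/
def pd3 (f : ℂ → ℂ → ℂ) : ℂ → ℂ → ℂ := fun a b => deriv (fun s => f a s) b

/-- The WDVV associativity equation `f₂₂₂ f₂₃₃ + f₃₃₃ = (f₂₂₃)²` for a function
`f(t₂, t₃)`, at every point of `ℂ²`. -/
def WDVV3 (f : ℂ → ℂ → ℂ) : Prop :=
  ∀ a b : ℂ,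
    pd2 (pd2 (pd2 f)) a b * pd3 (pd3 (pd2 f)) a b + pd3 (pd3 (pd3 f)) a b
      = (pd3 (pd2 (pd2 f)) a b) ^ 2

lemma hasDerivAt_mono (c : ℂ) (n : ℕ) (x : ℂ) :
    HasDerivAt (fun s : ℂ => c * s ^ n) (c * n * x ^ (n - 1)) x := by
  simpa [mul_assoc] using (hasDerivAt_pow n x).const_mul c

lemma deriv3 (c1 c2 c3 : ℂ) (n1 n2 n3 : ℕ) (x : ℂ) :
    deriv (fun s : ℂ => c1 * s ^ n1 + c2 * s ^ n2 + c3 * s ^ n3) x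
      = c1 * n1 * x ^ (n1 - 1) + c2 * n2 * x ^ (n2 - 1) + c3 * n3 * x ^ (n3 - 1) :=
  (((hasDerivAt_mono c1 n1 x).add (hasDerivAt_mono c2 n2 x)).add
    (hasDerivAt_mono c3 n3 x)).deriv

lemma pd2_fun (f g : ℂ → ℂ → ℂ) (c1 c2 c3 : ℂ → ℂ) (n1 n2 n3 : ℕ)
    (hf : ∀ x y, f x y = c1 y * x ^ n1 + c2 y * x ^ n2 + c3 y * x ^ n3)
    (hg : ∀ x y, g x y
      = c1 y * n1 * x ^ (n1 - 1) + c2 y * n2 * x ^ (n2 - 1) + c3 y * n3 * x ^ (n3 - 1)) :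
    pd2 f = g := by
  funext x y
  have h : (fun s => f s y) = fun s => c1 y * s ^ n1 + c2 y * s ^ n2 + c3 y * s ^ n3 :=
    funext fun s => hf s y
  rw [pd2, h, deriv3, ← hg]

lemma pd3_fun (f g : ℂ → ℂ → ℂ) (c1 c2 c3 : ℂ → ℂ) (n1 n2 n3 : ℕ)
    (hf : ∀ x y, f x y = c1 x * y ^ n1 + c2 x * y ^ n2 + c3 x * y ^ n3)
    (hg : ∀ x y, g x y
      = c1 x * n1 * y ^ (n1 - 1) + c2 x * n2 * y ^ (n2 - 1) + c3 x * n3 * y ^ (n3 - 1)) :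
    pd3 f = g := by
  funext x y
  have h : (fun s => f x s) = fun s => c1 x * s ^ n1 + c2 x * s ^ n2 + c3 x * s ^ n3 :=
    funext fun s => hf x s
  rw [pd3, h, deriv3, ← hg]

/-- **Polynomial solutions of the WDVV equations associated with the Coxeter groups
`A₃`, `B₃`, `H₃`**. -/
theorem polynomial_WDVV_solutions (a : ℂ) :
    WDVV3 (fun t2 t3 => a * t2^2 * t3^2 + (4/15) * a^2 * t3^5) ∧
    WDVV3 (fun t2 t3 => a * t2^3 * t3 + 6 * a^2 * t2^2 * t3^3 + (216/35) * a^4 * t3^7) ∧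
    WDVV3 (fun t2 t3 =>
      a * t2^3 * t3^2 + (9/5) * a^2 * t2^2 * t3^5 + (18/55) * a^4 * t3^11) := by
  refine ⟨?_, ?_, ?_⟩
  · -- A3
    have h2 : pd2 (fun t2 t3 => a * t2^2 * t3^2 + (4/15) * a^2 * t3^5)
        = fun x y => 2*a*x*y^2 :=
      pd2_fun _ _ (fun y => a*y^2) (fun y => (4/15)*a^2*y^5) (fun _ => 0) 2 0 0
        (by intro x y; ring) (by intro x y; simp only [Nat.reduceSub]; push_cast; ring)
    have h22 : pd2 (fun x y : ℂ => 2*a*x*y^2) = fun x y => 2*a*y^2 :=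
      pd2_fun _ _ (fun y => 2*a*y^2) (fun _ => 0) (fun _ => 0) 1 0 0
        (by intro x y; ring) (by intro x y; simp only [Nat.reduceSub]; push_cast; ring)
    have h222 : pd2 (fun x y : ℂ => 2*a*y^2) = fun _ _ => 0 :=
      pd2_fun _ _ (fun y => 2*a*y^2) (fun _ => 0) (fun _ => 0) 0 0 0
        (by intro x y; ring) (by intro x y; simp only [Nat.reduceSub]; push_cast; ring)
    have h223 : pd3 (fun x y : ℂ => 2*a*y^2) = fun x y => 4*a*y :=
      pd3_fun _ _ (fun _ => 2*a) (fun _ => 0) (fun _ => 0) 2 0 0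
        (by intro x y; ring) (by intro x y; simp only [Nat.reduceSub]; push_cast; ring)
    have h23 : pd3 (fun x y : ℂ => 2*a*x*y^2) = fun x y => 4*a*x*y :=
      pd3_fun _ _ (fun x => 2*a*x) (fun _ => 0) (fun _ => 0) 2 0 0
        (by intro x y; ring) (by intro x y; simp only [Nat.reduceSub]; push_cast; ring)
    have h233 : pd3 (fun x y : ℂ => 4*a*x*y) = fun x y => 4*a*x :=
      pd3_fun _ _ (fun x => 4*a*x) (fun _ => 0) (fun _ => 0) 1 0 0
        (by intro x y; ring) (by intro x y; simp only [Nat.reduceSub]; push_cast; ring)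
    have h3 : pd3 (fun t2 t3 => a * t2^2 * t3^2 + (4/15) * a^2 * t3^5)
        = fun x y => 2*a*x^2*y + (4/3)*a^2*y^4 :=
      pd3_fun _ _ (fun x => a*x^2) (fun _ => (4/15)*a^2) (fun _ => 0) 2 5 0
        (by intro x y; ring) (by intro x y; simp only [Nat.reduceSub]; push_cast; ring)
    have h33 : pd3 (fun x y : ℂ => 2*a*x^2*y + (4/3)*a^2*y^4)
        = fun x y => 2*a*x^2 + (16/3)*a^2*y^3 :=
      pd3_fun _ _ (fun x => 2*a*x^2) (fun _ => (4/3)*a^2) (fun _ => 0) 1 4 0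
        (by intro x y; ring) (by intro x y; simp only [Nat.reduceSub]; push_cast; ring)
    have h333 : pd3 (fun x y : ℂ => 2*a*x^2 + (16/3)*a^2*y^3) = fun x y => 16*a^2*y^2 :=
      pd3_fun _ _ (fun x => 2*a*x^2) (fun _ => (16/3)*a^2) (fun _ => 0) 0 3 0
        (by intro x y; ring) (by intro x y; simp only [Nat.reduceSub]; push_cast; ring)
    intro x y
    rw [h2, h22, h222, h223, h23, h233, h3, h33, h333]
    ring
  · -- B3
    have h2 : pd2 (fun t2 t3 => a * t2^3 * t3 + 6 * a^2 * t2^2 * t3^3 + (216/35) * a^4 * t3^7)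
        = fun x y => 3*a*x^2*y + 12*a^2*x*y^3 :=
      pd2_fun _ _ (fun y => a*y) (fun y => 6*a^2*y^3) (fun y => (216/35)*a^4*y^7) 3 2 0
        (by intro x y; ring) (by intro x y; simp only [Nat.reduceSub]; push_cast; ring)
    have h22 : pd2 (fun x y : ℂ => 3*a*x^2*y + 12*a^2*x*y^3)
        = fun x y => 6*a*x*y + 12*a^2*y^3 :=
      pd2_fun _ _ (fun y => 3*a*y) (fun y => 12*a^2*y^3) (fun _ => 0) 2 1 0
        (by intro x y; ring) (by intro x y; simp only [Nat.reduceSub]; push_cast; ring)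
    have h222 : pd2 (fun x y : ℂ => 6*a*x*y + 12*a^2*y^3) = fun x y => 6*a*y :=
      pd2_fun _ _ (fun y => 6*a*y) (fun y => 12*a^2*y^3) (fun _ => 0) 1 0 0
        (by intro x y; ring) (by intro x y; simp only [Nat.reduceSub]; push_cast; ring)
    have h223 : pd3 (fun x y : ℂ => 6*a*x*y + 12*a^2*y^3) = fun x y => 6*a*x + 36*a^2*y^2 :=
      pd3_fun _ _ (fun x => 6*a*x) (fun _ => 12*a^2) (fun _ => 0) 1 3 0
        (by intro x y; ring) (by intro x y; simp only [Nat.reduceSub]; push_cast; ring)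
    have h23 : pd3 (fun x y : ℂ => 3*a*x^2*y + 12*a^2*x*y^3)
        = fun x y => 3*a*x^2 + 36*a^2*x*y^2 :=
      pd3_fun _ _ (fun x => 3*a*x^2) (fun x => 12*a^2*x) (fun _ => 0) 1 3 0
        (by intro x y; ring) (by intro x y; simp only [Nat.reduceSub]; push_cast; ring)
    have h233 : pd3 (fun x y : ℂ => 3*a*x^2 + 36*a^2*x*y^2) = fun x y => 72*a^2*x*y :=
      pd3_fun _ _ (fun x => 3*a*x^2) (fun x => 36*a^2*x) (fun _ => 0) 0 2 0
        (by intro x y; ring) (by intro x y; simp only [Nat.reduceSub]; push_cast; ring)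
    have h3 : pd3 (fun t2 t3 => a * t2^3 * t3 + 6 * a^2 * t2^2 * t3^3 + (216/35) * a^4 * t3^7)
        = fun x y => a*x^3 + 18*a^2*x^2*y^2 + (216/5)*a^4*y^6 :=
      pd3_fun _ _ (fun x => a*x^3) (fun x => 6*a^2*x^2) (fun _ => (216/35)*a^4) 1 3 7
        (by intro x y; ring) (by intro x y; simp only [Nat.reduceSub]; push_cast; ring)
    have h33 : pd3 (fun x y : ℂ => a*x^3 + 18*a^2*x^2*y^2 + (216/5)*a^4*y^6)
        = fun x y => 36*a^2*x^2*y + (1296/5)*a^4*y^5 :=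
      pd3_fun _ _ (fun x => a*x^3) (fun x => 18*a^2*x^2) (fun _ => (216/5)*a^4) 0 2 6
        (by intro x y; ring) (by intro x y; simp only [Nat.reduceSub]; push_cast; ring)
    have h333 : pd3 (fun x y : ℂ => 36*a^2*x^2*y + (1296/5)*a^4*y^5)
        = fun x y => 36*a^2*x^2 + 1296*a^4*y^4 :=
      pd3_fun _ _ (fun x => 36*a^2*x^2) (fun _ => (1296/5)*a^4) (fun _ => 0) 1 5 0
        (by intro x y; ring) (by intro x y; simp only [Nat.reduceSub]; push_cast; ring)
    intro x y
    rw [h2, h22, h222, h223, h23, h233, h3, h33, h333]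
    ring
  · -- H3
    have h2 : pd2 (fun t2 t3 =>
          a * t2^3 * t3^2 + (9/5) * a^2 * t2^2 * t3^5 + (18/55) * a^4 * t3^11)
        = fun x y => 3*a*x^2*y^2 + (18/5)*a^2*x*y^5 :=
      pd2_fun _ _ (fun y => a*y^2) (fun y => (9/5)*a^2*y^5) (fun y => (18/55)*a^4*y^11) 3 2 0
        (by intro x y; ring) (by intro x y; simp only [Nat.reduceSub]; push_cast; ring)
    have h22 : pd2 (fun x y : ℂ => 3*a*x^2*y^2 + (18/5)*a^2*x*y^5)
        = fun x y => 6*a*x*y^2 + (18/5)*a^2*y^5 :=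
      pd2_fun _ _ (fun y => 3*a*y^2) (fun y => (18/5)*a^2*y^5) (fun _ => 0) 2 1 0
        (by intro x y; ring) (by intro x y; simp only [Nat.reduceSub]; push_cast; ring)
    have h222 : pd2 (fun x y : ℂ => 6*a*x*y^2 + (18/5)*a^2*y^5) = fun x y => 6*a*y^2 :=
      pd2_fun _ _ (fun y => 6*a*y^2) (fun y => (18/5)*a^2*y^5) (fun _ => 0) 1 0 0
        (by intro x y; ring) (by intro x y; simp only [Nat.reduceSub]; push_cast; ring)
    have h223 : pd3 (fun x y : ℂ => 6*a*x*y^2 + (18/5)*a^2*y^5)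
        = fun x y => 12*a*x*y + 18*a^2*y^4 :=
      pd3_fun _ _ (fun x => 6*a*x) (fun _ => (18/5)*a^2) (fun _ => 0) 2 5 0
        (by intro x y; ring) (by intro x y; simp only [Nat.reduceSub]; push_cast; ring)
    have h23 : pd3 (fun x y : ℂ => 3*a*x^2*y^2 + (18/5)*a^2*x*y^5)
        = fun x y => 6*a*x^2*y + 18*a^2*x*y^4 :=
      pd3_fun _ _ (fun x => 3*a*x^2) (fun x => (18/5)*a^2*x) (fun _ => 0) 2 5 0
        (by intro x y; ring) (by intro x y; simp only [Nat.reduceSub]; push_cast; ring)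
    have h233 : pd3 (fun x y : ℂ => 6*a*x^2*y + 18*a^2*x*y^4)
        = fun x y => 6*a*x^2 + 72*a^2*x*y^3 :=
      pd3_fun _ _ (fun x => 6*a*x^2) (fun x => 18*a^2*x) (fun _ => 0) 1 4 0
        (by intro x y; ring) (by intro x y; simp only [Nat.reduceSub]; push_cast; ring)
    have h3 : pd3 (fun t2 t3 =>
          a * t2^3 * t3^2 + (9/5) * a^2 * t2^2 * t3^5 + (18/55) * a^4 * t3^11)
        = fun x y => 2*a*x^3*y + 9*a^2*x^2*y^4 + (18/5)*a^4*y^10 :=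
      pd3_fun _ _ (fun x => a*x^3) (fun x => (9/5)*a^2*x^2) (fun _ => (18/55)*a^4) 2 5 11
        (by intro x y; ring) (by intro x y; simp only [Nat.reduceSub]; push_cast; ring)
    have h33 : pd3 (fun x y : ℂ => 2*a*x^3*y + 9*a^2*x^2*y^4 + (18/5)*a^4*y^10)
        = fun x y => 2*a*x^3 + 36*a^2*x^2*y^3 + 36*a^4*y^9 :=
      pd3_fun _ _ (fun x => 2*a*x^3) (fun x => 9*a^2*x^2) (fun _ => (18/5)*a^4) 1 4 10
        (by intro x y; ring) (by intro x y; simp only [Nat.reduceSub]; push_cast; ring)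
    have h333 : pd3 (fun x y : ℂ => 2*a*x^3 + 36*a^2*x^2*y^3 + 36*a^4*y^9)
        = fun x y => 108*a^2*x^2*y^2 + 324*a^4*y^8 :=
      pd3_fun _ _ (fun x => 2*a*x^3) (fun x => 36*a^2*x^2) (fun _ => 36*a^4) 0 3 9
        (by intro x y; ring) (by intro x y; simp only [Nat.reduceSub]; push_cast; ring)
    intro x y
    rw [h2, h22, h222, h223, h23, h233, h3, h33, h333]
    ring
end
end

section
/- (Chazy equation correspondence.) Let U ⊆ ℂ be open and let γ : U → ℂ be three times differentiable. Then the function f(t2, t3) := −(1/16)·t2⁴·γ(t3) satisfies the WDVV equation f_{222}·f_{233} + f_{333} = (f_{223})² at every point (t2, t3) ∈ ℂ × U if and only if γ satisfies the Chazy equation γ'''(t3) = 6·γ(t3)·γ''(t3) − 9·(γ'(t3))² at every t3 ∈ U. -/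
/-!
Separating variables, `f = p(t₂) γ(t₃)` with `p = -t₂⁴/16` has `f_{ijk} = p^{(m)} γ^{(n)}`,
where `m` and `n` count the indices equal to 2 and 3. Since `p'''p' = 3t₂⁴/8`, `p''² = 9t₂⁴/16`,
the WDVV residual `f₂₂₂f₂₃₃ + f₃₃₃ - f₂₂₃²` is `-(t₂⁴/16)(γ''' - 6γγ'' + 9γ'²)`,
which vanishes for all `t₂` exactly when the Chazy equation holds.
-/

noncomputable section

theorem pd2_mul (p g : ℂ → ℂ) : pd2 (fun a b => p a * g b) = fun a b => deriv p a * g b := by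
  funext a b
  exact deriv_mul_const_field (g b)

theorem pd3_mul (p g : ℂ → ℂ) : pd3 (fun a b => p a * g b) = fun a b => p a * deriv g b := by
  funext a b
  exact deriv_const_mul_field (p a)

theorem deriv_const_mul_pow {𝕜 : Type*} [NontriviallyNormedField 𝕜] (c : 𝕜) (n : ℕ) :
    deriv (fun t : 𝕜 => c * t ^ n) = fun t => c * n * t ^ (n - 1) := by
  funext t
  rw [deriv_const_mul_field, deriv_pow_field, mul_assoc]

theorem chazy_correspondence_general
    (U : Set ℂ) (γ : ℂ → ℂ) :
    (∀ a : ℂ, ∀ b ∈ U,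
      pd2 (pd2 (pd2 (fun t2 t3 => -(1/16) * t2^4 * γ t3))) a b *
          pd3 (pd3 (pd2 (fun t2 t3 => -(1/16) * t2^4 * γ t3))) a b
        + pd3 (pd3 (pd3 (fun t2 t3 => -(1/16) * t2^4 * γ t3))) a b
        = (pd3 (pd2 (pd2 (fun t2 t3 => -(1/16) * t2^4 * γ t3))) a b) ^ 2)
    ↔ (∀ t ∈ U,
        deriv (deriv (deriv γ)) t = 6 * γ t * deriv (deriv γ) t - 9 * (deriv γ t) ^ 2) := by
  simp only [pd2_mul, pd3_mul, deriv_const_mul_pow]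
  constructor
  · intro hwdvv t ht
    linear_combination (-16) * hwdvv 1 t ht
  · intro hchazy a b hb
    linear_combination (-(1/16) * a ^ 4) * hchazy b hb

/-- **Chazy equation correspondence**: `f(t₂,t₃) = −(1/16)t₂⁴γ(t₃)` satisfies the
WDVV equation `f₂₂₂ f₂₃₃ + f₃₃₃ = (f₂₂₃)²` on `ℂ × U` if and only if `γ` satisfies
the Chazy equation `γ''' = 6γγ'' − 9(γ')²` on `U`. -/
theorem chazy_correspondence
    (U : Set ℂ) (hU : IsOpen U) (γ : ℂ → ℂ)
    (hγ : ∀ t ∈ U, DifferentiableAt ℂ γ t ∧ DifferentiableAt ℂ (deriv γ) t ∧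
      DifferentiableAt ℂ (deriv (deriv γ)) t) :
    (∀ a : ℂ, ∀ b ∈ U,
      pd2 (pd2 (pd2 (fun t2 t3 => -(1/16) * t2^4 * γ t3))) a b *
          pd3 (pd3 (pd2 (fun t2 t3 => -(1/16) * t2^4 * γ t3))) a b
        + pd3 (pd3 (pd3 (fun t2 t3 => -(1/16) * t2^4 * γ t3))) a b
        = (pd3 (pd2 (pd2 (fun t2 t3 => -(1/16) * t2^4 * γ t3))) a b) ^ 2)
    ↔ (∀ t ∈ U,
        deriv (deriv (deriv γ)) t = 6 * γ t * deriv (deriv γ) t - 9 * (deriv γ t) ^ 2) :=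
  chazy_correspondence_general U γ
end
end

section
/- (The WDVV equation for ℂP² determines the Gromov–Witten potential uniquely from its first coefficient.) For every c ∈ ℂ there exists a unique formal power series Φ = Σ_{k≥1} A_k q^k ∈ ℂ⟦q⟧ with zero constant term and with coefficient of q equal to c (A_1 = c), such that the identity of formal power series −6Φ + 33·DΦ − 54·D²Φ − (D²Φ)² + (D³Φ)·(27 + 2·DΦ − 3·D²Φ) = 0 holds in ℂ⟦q⟧, where D denotes the derivation D(f) := q·(df/dq) on ℂ⟦q⟧. -/
noncomputable section

/-- The Euler derivation `D(f) = q·df/dq` on formal power series: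
the `n`-th coefficient of `D f` is `n` times the `n`-th coefficient of `f`. -/
def Dop (f : PowerSeries ℂ) : PowerSeries ℂ :=
  PowerSeries.mk fun n => (n : ℂ) * PowerSeries.coeff n f

namespace Kont

/-- `P n = 27n³ − 54n² + 33n − 6 = 3(n−1)(3n−1)(3n−2)`. -/
def P (n : ℕ) : ℂ := 27 * n^3 - 54 * n^2 + 33 * n - 6

/-- Quadratic kernel of the recursion. -/
def g (i j : ℕ) : ℂ := -((i:ℂ)^2 * (j:ℂ)^2) + 2 * (i:ℂ)^3 * j - 3 * (i:ℂ)^3 * (j:ℂ)^2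

lemma g_zero_left (j : ℕ) : g 0 j = 0 := by simp [g]
lemma g_zero_right (i : ℕ) : g i 0 = 0 := by simp [g]

lemma P_one : P 1 = 0 := by norm_num [P]

lemma P_ne_zero {n : ℕ} (hn : 2 ≤ n) : P n ≠ 0 := by
  have h : P n = 3 * ((n:ℂ) - 1) * (3*(n:ℂ) - 1) * (3*(n:ℂ) - 2) := by unfold P; ring
  rw [h]
  have h1 : (n:ℂ) - 1 ≠ 0 := sub_ne_zero.mpr (by exact_mod_cast (by omega : n ≠ 1))
  have h2 : 3*(n:ℂ) - 1 ≠ 0 := by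
    intro h
    rw [sub_eq_zero] at h
    have h' : ((3*n:ℕ):ℂ) = ((1:ℕ):ℂ) := by push_cast; exact h
    have := Nat.cast_injective h'
    omega
  have h3 : 3*(n:ℂ) - 2 ≠ 0 := by
    intro h
    rw [sub_eq_zero] at h
    have h' : ((3*n:ℕ):ℂ) = ((2:ℕ):ℂ) := by push_cast; exact h
    have := Nat.cast_injective h'
    omega
  exact mul_ne_zero (mul_ne_zero (mul_ne_zero three_ne_zero h1) h2) h3

/-- The coefficients defined by Kontsevich's recursion with `A 1 = c`. -/
def A (c : ℂ) : ℕ → ℂ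
  | 0 => 0
  | 1 => c
  | n+2 => -(P (n+2))⁻¹ *
      ∑ i ∈ (Finset.Ioo 0 (n+2)).attach, g i.1 (n+2-i.1) * A c i.1 * A c (n+2-i.1)
decreasing_by
  all_goals (have := Finset.mem_Ioo.mp i.2; omega)

/-- The WDVV differential expression. -/
def E (f : PowerSeries ℂ) : PowerSeries ℂ :=
  -6 * f + 33 * Dop f - 54 * Dop (Dop f) - (Dop (Dop f)) ^ 2
    + Dop (Dop (Dop f)) * (27 + 2 * Dop f - 3 * Dop (Dop f))

lemma coeff_Dop (n : ℕ) (f : PowerSeries ℂ) :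
    PowerSeries.coeff n (Dop f) = n * PowerSeries.coeff n f := by simp [Dop]

lemma coeff_intMul (m : ℤ) (f : PowerSeries ℂ) (n : ℕ) :
    PowerSeries.coeff n ((m : PowerSeries ℂ) * f) = m * PowerSeries.coeff n f := by
  rw [← zsmul_eq_mul, map_zsmul, zsmul_eq_mul]

lemma coeff_mul' (f g : PowerSeries ℂ) (n : ℕ) :
    PowerSeries.coeff n (f * g) =
      ∑ p ∈ Finset.HasAntidiagonal.antidiagonal n, PowerSeries.coeff p.1 f * PowerSeries.coeff p.2 g :=
  PowerSeries.coeff_mul n f g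

/-- The `n`-th coefficient of the WDVV expression. -/
lemma coeff_E (a : ℕ → ℂ) (n : ℕ) :
    PowerSeries.coeff n (E (PowerSeries.mk a)) =
      P n * a n + ∑ p ∈ Finset.HasAntidiagonal.antidiagonal n, g p.1 p.2 * a p.1 * a p.2 := by
  set f := PowerSeries.mk a with hf
  have hE : E f = ((-6 : ℤ) : PowerSeries ℂ) * f + ((33:ℤ):PowerSeries ℂ) * Dop f
      + ((-54:ℤ):PowerSeries ℂ) * Dop (Dop f) + ((27:ℤ):PowerSeries ℂ) * Dop (Dop (Dop f))
      + ((-1:ℤ):PowerSeries ℂ) * (Dop (Dop f) * Dop (Dop f))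
      + ((2:ℤ):PowerSeries ℂ) * (Dop (Dop (Dop f)) * Dop f)
      + ((-3:ℤ):PowerSeries ℂ) * (Dop (Dop (Dop f)) * Dop (Dop f)) := by
    unfold E; push_cast; ring
  rw [hE]
  simp only [map_add, coeff_intMul]
  simp only [coeff_mul', coeff_Dop, hf, PowerSeries.coeff_mk,
    Int.cast_neg, Int.cast_ofNat, Int.cast_one]
  have key : ∑ p ∈ Finset.HasAntidiagonal.antidiagonal n, g p.1 p.2 * a p.1 * a p.2
      = (-1 : ℂ) * ∑ p ∈ Finset.HasAntidiagonal.antidiagonal n,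
          ((p.1:ℂ) * ((p.1:ℂ) * a p.1)) * ((p.2:ℂ) * ((p.2:ℂ) * a p.2))
      + 2 * ∑ p ∈ Finset.HasAntidiagonal.antidiagonal n,
          ((p.1:ℂ) * ((p.1:ℂ) * ((p.1:ℂ) * a p.1))) * ((p.2:ℂ) * a p.2)
      + (-3 : ℂ) * ∑ p ∈ Finset.HasAntidiagonal.antidiagonal n,
          ((p.1:ℂ) * ((p.1:ℂ) * ((p.1:ℂ) * a p.1))) * ((p.2:ℂ) * ((p.2:ℂ) * a p.2)) := by
    rw [Finset.mul_sum, Finset.mul_sum, Finset.mul_sum, ← Finset.sum_add_distrib,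
      ← Finset.sum_add_distrib]
    exact Finset.sum_congr rfl fun p _ => by unfold g; ring
  unfold P
  linear_combination -key

/-- The antidiagonal sum reduces to a sum over `Ioo 0 n` since `g` vanishes when
either argument is `0`. -/
lemma sum_reduce (a : ℕ → ℂ) (n : ℕ) :
    ∑ p ∈ Finset.HasAntidiagonal.antidiagonal n, g p.1 p.2 * a p.1 * a p.2
      = ∑ i ∈ Finset.Ioo 0 n, g i (n-i) * a i * a (n-i) := by
  rw [Finset.Nat.sum_antidiagonal_eq_sum_range_succ_mk]
  refine (Finset.sum_subset (fun x hx => ?_) (fun x hx hx' => ?_)).symm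
  · simp only [Finset.mem_Ioo] at hx; simp only [Finset.mem_range]; omega
  · simp only [Finset.mem_range] at hx
    simp only [Finset.mem_Ioo, not_and, not_lt] at hx'
    rcases Nat.eq_zero_or_pos x with rfl | hx0
    · simp [g_zero_left]
    · have : x = n := by omega
      subst this
      simp [g_zero_right]

/-- The defining recursion for `A`, rephrased. -/
lemma A_rec (c : ℂ) (n : ℕ) :
    P n * A c n + ∑ i ∈ Finset.Ioo 0 n, g i (n-i) * A c i * A c (n-i) = 0 := by
  match n with
  | 0 => simp [A]
  | 1 =>
    have he : Finset.Ioo 0 1 = ∅ := rfl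
    simp [A, P_one, he]
  | m+2 =>
    have hP : P (m+2) ≠ 0 := P_ne_zero (by omega)
    have hA : A c (m+2) = -(P (m+2))⁻¹ *
        ∑ i ∈ (Finset.Ioo 0 (m+2)).attach, g i.1 (m+2-i.1) * A c i.1 * A c (m+2-i.1) := by
      rw [A]
    rw [hA, Finset.sum_attach (Finset.Ioo 0 (m+2))
      (fun i => g i (m+2-i) * A c i * A c (m+2-i))]
    field_simp
    ring

/-- The recursion-defined series satisfies the WDVV equation coefficientwise. -/
lemma E_A (c : ℂ) : E (PowerSeries.mk (A c)) = 0 := by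
  ext n
  rw [coeff_E, sum_reduce, A_rec, map_zero]

/-- Uniqueness: any solution has coefficients `A c`. -/
lemma coeff_eq_A (c : ℂ) (Ψ : PowerSeries ℂ) (h0 : PowerSeries.coeff 0 Ψ = 0)
    (h1 : PowerSeries.coeff 1 Ψ = c) (hE : E Ψ = 0) (n : ℕ) :
    PowerSeries.coeff n Ψ = A c n := by
  set b : ℕ → ℂ := fun k => PowerSeries.coeff k Ψ with hb
  have hΨ : Ψ = PowerSeries.mk b := by
    ext k; simp [hb]
  have hcoef : ∀ m, P m * b m + ∑ i ∈ Finset.Ioo 0 m, g i (m-i) * b i * b (m-i) = 0 := by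
    intro m
    have := congrArg (PowerSeries.coeff m) hE
    rw [hΨ, coeff_E, sum_reduce, map_zero] at this
    exact this
  induction n using Nat.strong_induction_on with
  | _ n ih =>
    match n with
    | 0 => simpa [A] using h0
    | 1 => simpa [A] using h1
    | m+2 =>
      have hP : P (m+2) ≠ 0 := P_ne_zero (by omega)
      have hsum : ∑ i ∈ Finset.Ioo 0 (m+2), g i (m+2-i) * b i * b (m+2-i)
          = ∑ i ∈ Finset.Ioo 0 (m+2), g i (m+2-i) * A c i * A c (m+2-i) := by
        refine Finset.sum_congr rfl fun i hi => ?_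
        have hi' := Finset.mem_Ioo.mp hi
        simp only [hb]
        rw [ih i (by omega), ih (m+2-i) (by omega)]
      have h1' := hcoef (m+2)
      have h2' := A_rec c (m+2)
      rw [hsum] at h1'
      have : P (m+2) * b (m+2) = P (m+2) * A c (m+2) := by linear_combination h1' - h2'
      exact mul_left_cancel₀ hP this

end Kont

/-- **The WDVV equation for `ℂP²` determines the Gromov–Witten potential uniquely from
its first coefficient**: for every `c ∈ ℂ` there is a unique formal power series `Φ` with
`Φ(0) = 0` and first coefficient `c` satisfying
`−6Φ + 33DΦ − 54D²Φ − (D²Φ)² + D³Φ·(27 + 2DΦ − 3D²Φ) = 0`. -/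
theorem kontsevich_recursion_unique (c : ℂ) :
    ∃! Φ : PowerSeries ℂ,
      PowerSeries.coeff 0 Φ = 0 ∧
      PowerSeries.coeff 1 Φ = c ∧
      -6 * Φ + 33 * Dop Φ - 54 * Dop (Dop Φ) - (Dop (Dop Φ)) ^ 2
        + Dop (Dop (Dop Φ)) * (27 + 2 * Dop Φ - 3 * Dop (Dop Φ)) = 0 := by
  refine ⟨PowerSeries.mk (Kont.A c), ⟨?_, ?_, ?_⟩, ?_⟩
  · simp [Kont.A]
  · simp [Kont.A]
  · exact Kont.E_A c
  · rintro Ψ ⟨h0, h1, hE⟩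
    ext n
    rw [PowerSeries.coeff_mk]
    exact Kont.coeff_eq_A c Ψ h0 h1 hE n
end
end
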